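/- arXiv:1709.05555 — 11 statements merged into one kernel-verified Lean document; each statement's English description precedes it below -/
import Mathlib

section
/- Let p and q be real polynomials with positive leading coefficients, say p(t) = Σ_{i=0}^{deg p} a_i t^i and q(t) = Σ_{j=0}^{deg q} b_j t^j. Then (p·q′ − p′·q)(t) ≤ 0 for all sufficiently large real t if and only if either deg p > deg q, or deg p = deg q =: d and p(t)/a_d ≤ q(t)/b_d for all sufficiently large real t. -/
open Polynomial Filter

private lemma lead_eq_coeff {s : Polynomial ℝ} {N : ℕ} (h1 : s.natDegree ≤ N)
    (h2 : s.coeff N ≠ 0) : s.leadingCoeff = s.coeff N := by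
  have h3 : N ≤ s.natDegree := le_natDegree_of_ne_zero h2
  have h4 : s.natDegree = N := le_antisymm h1 h3
  rw [leadingCoeff, h4]

private lemma deriv_data {s : Polynomial ℝ} (hs : s.natDegree ≠ 0) :
    (derivative s).natDegree = s.natDegree - 1 ∧
      (derivative s).leadingCoeff = s.leadingCoeff * s.natDegree := by
  have hco : (derivative s).coeff (s.natDegree - 1) = s.leadingCoeff * s.natDegree := by
    rw [coeff_derivative]
    have h1 : s.natDegree - 1 + 1 = s.natDegree := by omega
    rw [h1, coeff_natDegree]
    have h2 : ((s.natDegree - 1 : ℕ) : ℝ) + 1 = (s.natDegree : ℝ) := by exact_mod_cast h1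
    rw [h2]
  have hlc : s.leadingCoeff ≠ 0 := leadingCoeff_ne_zero.mpr (fun h => hs (by simp [h]))
  have hne : (derivative s).coeff (s.natDegree - 1) ≠ 0 := by
    rw [hco]
    have : (s.natDegree : ℝ) ≠ 0 := Nat.cast_ne_zero.mpr hs
    exact mul_ne_zero hlc this
  have hdeg : (derivative s).natDegree = s.natDegree - 1 :=
    le_antisymm (natDegree_derivative_le s) (le_natDegree_of_ne_zero hne)
  exact ⟨hdeg, by rw [leadingCoeff, hdeg, hco]⟩

private lemma mul_deriv_data (u v : Polynomial ℝ) :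
    (u * derivative v).natDegree ≤ u.natDegree + v.natDegree - 1 ∧
      (u * derivative v).coeff (u.natDegree + v.natDegree - 1)
        = u.leadingCoeff * v.leadingCoeff * v.natDegree := by
  by_cases hv : v.natDegree = 0
  · simp [derivative_of_natDegree_zero hv, hv]
  · obtain ⟨hd, hl⟩ := deriv_data hv
    have hN : u.natDegree + (derivative v).natDegree = u.natDegree + v.natDegree - 1 := by
      rw [hd]; omega
    constructor
    · calc (u * derivative v).natDegree ≤ u.natDegree + (derivative v).natDegree :=
            natDegree_mul_le
        _ = u.natDegree + v.natDegree - 1 := hN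
    · rw [← hN, coeff_mul_degree_add_degree, hl]
      ring

private lemma wronskian_data (u v : Polynomial ℝ) :
    (u * derivative v - derivative u * v).natDegree ≤ u.natDegree + v.natDegree - 1 ∧
      (u * derivative v - derivative u * v).coeff (u.natDegree + v.natDegree - 1)
        = u.leadingCoeff * v.leadingCoeff * ((v.natDegree : ℝ) - (u.natDegree : ℝ)) := by
  obtain ⟨h1, h2⟩ := mul_deriv_data u v
  obtain ⟨h3, h4⟩ := mul_deriv_data v u
  have hcomm : v.natDegree + u.natDegree - 1 = u.natDegree + v.natDegree - 1 := by omega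
  have h3' : (derivative u * v).natDegree ≤ u.natDegree + v.natDegree - 1 := by
    rw [mul_comm (derivative u) v]; omega
  have h4' : (derivative u * v).coeff (u.natDegree + v.natDegree - 1)
      = v.leadingCoeff * u.leadingCoeff * u.natDegree := by
    rw [mul_comm (derivative u) v, ← hcomm, h4]
  constructor
  · exact (natDegree_sub_le _ _).trans (max_le h1 h3')
  · rw [coeff_sub, h2, h4']
    ring

private lemma eventually_le_zero_iff (s : Polynomial ℝ) :
    (∀ᶠ t : ℝ in atTop, s.eval t ≤ 0) ↔ s.leadingCoeff ≤ 0 := by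
  constructor
  · intro h
    by_contra hc
    push_neg at hc
    by_cases hd : 0 < s.degree
    · have ht := s.tendsto_atTop_of_leadingCoeff_nonneg hd hc.le
      obtain ⟨t, ht1, ht2⟩ := (h.and (ht.eventually_ge_atTop 1)).exists
      linarith
    · have hC : s = C (s.coeff 0) := degree_le_zero_iff.mp (not_lt.mp hd)
      obtain ⟨t, ht⟩ := h.exists
      rw [hC] at ht hc
      simp [leadingCoeff_C] at hc
      simp at ht
      linarith
  · intro h
    rcases eq_or_ne s 0 with rfl | hs
    · simp
    · by_cases hd : 0 < s.degree
      · exact (s.tendsto_atBot_of_leadingCoeff_nonpos hd h).eventually (eventually_le_atBot 0)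
      · have hC : s = C (s.coeff 0) := degree_le_zero_iff.mp (not_lt.mp hd)
        rw [hC] at h ⊢
        simp [leadingCoeff_C] at h
        filter_upwards with t
        simpa using h

/-- For real polynomials `p`, `q` with positive leading coefficients,
`(p q' - p' q)(t) ≤ 0` for all sufficiently large `t` iff either `deg p > deg q`, or
`deg p = deg q` and `p/a_d ≤ q/b_d` eventually (where `a_d`, `b_d` are the leading
coefficients). -/
theorem gieseker_preorder_characterization (p q : Polynomial ℝ)
    (hp : 0 < p.leadingCoeff) (hq : 0 < q.leadingCoeff) :
    (∀ᶠ t : ℝ in atTop,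
        (p * derivative q - derivative p * q).eval t ≤ 0) ↔
      (q.natDegree < p.natDegree ∨
        (p.natDegree = q.natDegree ∧
          ∀ᶠ t : ℝ in atTop,
            p.eval t / p.leadingCoeff ≤ q.eval t / q.leadingCoeff)) := by
  set a := p.leadingCoeff with ha
  set b := q.leadingCoeff with hb
  set m := p.natDegree with hm
  set n := q.natDegree with hn
  set W := p * derivative q - derivative p * q with hW
  obtain ⟨hWdeg, hWcoeff⟩ := wronskian_data p q
  rcases lt_trichotomy m n with hlt | heq | hgt
  · -- deg p < deg q : both sides false
    apply iff_of_false
    · rw [eventually_le_zero_iff]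
      intro hle
      have hpos : (0:ℝ) < a * b * ((n : ℝ) - m) := by
        have : (m : ℝ) < n := by exact_mod_cast hlt
        have h1 : (0:ℝ) < (n:ℝ) - m := by linarith
        positivity
      have hcne : W.coeff (m + n - 1) ≠ 0 := by rw [hWcoeff]; exact ne_of_gt hpos
      have := lead_eq_coeff hWdeg hcne
      rw [this, hWcoeff] at hle
      linarith
    · rintro (h | ⟨h, _⟩) <;> omega
  · -- deg p = deg q
    have hp0 : p ≠ 0 := leadingCoeff_ne_zero.mp (ne_of_gt hp)
    have hq0 : q ≠ 0 := leadingCoeff_ne_zero.mp (ne_of_gt hq)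
    set r := C b * p - C a * q with hr
    have hident : C b * W = r * derivative q - derivative r * q := by
      rw [hW, hr]
      simp only [derivative_sub, derivative_C_mul]
      ring
    have hrcoeff : r.coeff n = 0 := by
      have h1 : p.coeff n = a := by rw [← heq, hm, ha]; exact coeff_natDegree
      have h2 : q.coeff n = b := by rw [hn, hb]; exact coeff_natDegree
      rw [hr, coeff_sub, coeff_C_mul, coeff_C_mul, h1, h2]
      ring
    have hrdeg : r.natDegree ≤ n := by
      rw [hr]
      refine (natDegree_sub_le _ _).trans (max_le ?_ ?_)
      · exact (natDegree_mul_le).trans (by rw [natDegree_C]; omega)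
      · exact (natDegree_mul_le).trans (by rw [natDegree_C]; omega)
    -- pointwise equivalence of the RHS condition
    have hev : (∀ᶠ t : ℝ in atTop, p.eval t / a ≤ q.eval t / b) ↔ r.leadingCoeff ≤ 0 := by
      rw [← eventually_le_zero_iff]
      apply eventually_congr
      filter_upwards with t
      rw [div_le_div_iff₀ hp hq, hr]
      simp only [eval_sub, eval_mul, eval_C]
      exact ⟨fun h => by linarith, fun h => by linarith⟩
    have hmain : W.leadingCoeff ≤ 0 ↔ r.leadingCoeff ≤ 0 := by
      rcases eq_or_ne r 0 with hr0 | hr0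
      · have hW0 : W = 0 := by
          have hbne : (C b : Polynomial ℝ) ≠ 0 := by
            simpa using ne_of_gt hq
          have := hident
          rw [hr0] at this
          simp only [zero_mul, derivative_zero, mul_zero, sub_zero] at this
          exact (mul_eq_zero.mp this).resolve_left hbne
        rw [hW0, hr0]
      · have hrlt : r.natDegree < n := by
          rcases lt_or_eq_of_le hrdeg with h | h
          · exact h
          · exfalso
            apply leadingCoeff_ne_zero.mpr hr0
            rw [leadingCoeff, h, hrcoeff]
        have hn0 : n ≠ 0 := by omega
        obtain ⟨hKdeg, hKcoeff⟩ := wronskian_data r q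
        set K := r.natDegree + n - 1 with hK
        have hpos : (0:ℝ) < b * ((n : ℝ) - r.natDegree) := by
          have : (r.natDegree : ℝ) < n := by exact_mod_cast hrlt
          have h1 : (0:ℝ) < (n:ℝ) - r.natDegree := by linarith
          positivity
        have hc : r.leadingCoeff ≠ 0 := leadingCoeff_ne_zero.mpr hr0
        have hcne : (r * derivative q - derivative r * q).coeff K ≠ 0 := by
          rw [hKcoeff]
          intro h
          rcases mul_eq_zero.mp (by linarith [h] : r.leadingCoeff * (b * ((n:ℝ) - r.natDegree)) = 0) with h1 | h1
          · exact hc h1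
          · linarith
        have hlead : (r * derivative q - derivative r * q).leadingCoeff
            = r.leadingCoeff * b * ((n:ℝ) - r.natDegree) :=
          (lead_eq_coeff hKdeg hcne).trans hKcoeff
        have hCbW : (C b * W).leadingCoeff = b * W.leadingCoeff := by
          rw [leadingCoeff_mul, leadingCoeff_C]
        have hkey : b * W.leadingCoeff = r.leadingCoeff * b * ((n:ℝ) - r.natDegree) := by
          rw [← hCbW, hident, hlead]
        constructor
        · intro h
          nlinarith
        · intro h
          nlinarith
    rw [eventually_le_zero_iff]
    constructor
    · intro h
      right
      exact ⟨heq, hev.mpr (hmain.mp h)⟩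
    · rintro (h | ⟨_, h⟩)
      · omega
      · exact hmain.mpr (hev.mp h)
  · -- deg p > deg q : both sides true
    apply iff_of_true
    · rw [eventually_le_zero_iff]
      have hneg : a * b * ((n : ℝ) - m) < 0 := by
        have : (n : ℝ) < m := by exact_mod_cast hgt
        have h1 : (n:ℝ) - m < 0 := by linarith
        have : 0 < a * b := mul_pos hp hq
        nlinarith
      have hcne : W.coeff (m + n - 1) ≠ 0 := by rw [hWcoeff]; exact ne_of_lt hneg
      rw [lead_eq_coeff hWdeg hcne, hWcoeff]
      linarith
    · exact Or.inl hgt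
end

section
/- The relation ⪯_G on the set of real polynomials with positive leading coefficient, defined by p ⪯_G q if and only if (p·q′ − p′·q)(t) ≤ 0 for all sufficiently large real t, is a total preorder: it is reflexive, transitive, and any two polynomials with positive leading coefficient are comparable. -/
open Polynomial Filter

/-- The Gieseker relation `p ⪯_G q` on real polynomials:
`(p q' - p' q)(t) ≤ 0` for all sufficiently large real `t`. -/
def GiesekerLE (p q : Polynomial ℝ) : Prop :=
  ∀ᶠ t : ℝ in atTop, (p * derivative q - derivative p * q).eval t ≤ 0

lemma eventually_pos_of_leadingCoeff_pos (p : Polynomial ℝ) (hp : 0 < p.leadingCoeff) :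
    ∀ᶠ t : ℝ in atTop, 0 < p.eval t := by
  have hp0 : p ≠ 0 := fun h => by simp [h] at hp
  rcases lt_or_ge 0 p.degree with hd | hd
  · exact (Polynomial.tendsto_atTop_of_leadingCoeff_nonneg p hd hp.le).eventually_gt_atTop 0
  · have : p = C (p.coeff 0) := p.eq_C_of_degree_le_zero hd
    rw [this]
    simp only [eval_C]
    have hn : p.natDegree = 0 := natDegree_eq_zero_iff_degree_le_zero.mpr hd
    have : p.leadingCoeff = p.coeff 0 := by rw [leadingCoeff, hn]
    exact Filter.Eventually.of_forall fun t => this ▸ hp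

/-- The relation `⪯_G` is a total preorder on the set of real polynomials
with positive leading coefficient: it is reflexive, transitive, and total. -/
theorem giesekerLE_total_preorder :
    (∀ p : Polynomial ℝ, 0 < p.leadingCoeff → GiesekerLE p p) ∧
    (∀ p q r : Polynomial ℝ, 0 < p.leadingCoeff → 0 < q.leadingCoeff →
      0 < r.leadingCoeff → GiesekerLE p q → GiesekerLE q r → GiesekerLE p r) ∧
    (∀ p q : Polynomial ℝ, 0 < p.leadingCoeff → 0 < q.leadingCoeff →
      GiesekerLE p q ∨ GiesekerLE q p) := by
  refine ⟨fun p _ => ?_, fun p q r hp hq hr hpq hqr => ?_, fun p q hp hq => ?_⟩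
  · unfold GiesekerLE
    simp [mul_comm]
  · have hpe := eventually_pos_of_leadingCoeff_pos p hp
    have hqe := eventually_pos_of_leadingCoeff_pos q hq
    have hre := eventually_pos_of_leadingCoeff_pos r hr
    filter_upwards [hpe, hqe, hre, hpq, hqr] with t htp htq htr h1 h2
    have key : (q * (p * derivative r - derivative p * r)).eval t =
        (r * (p * derivative q - derivative p * q)).eval t +
        (p * (q * derivative r - derivative q * r)).eval t := by
      simp only [eval_mul, eval_sub]
      ring
    have h3 : (q * (p * derivative r - derivative p * r)).eval t ≤ 0 := by
      rw [key]
      have := mul_nonpos_of_nonneg_of_nonpos htr.le h1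
      have := mul_nonpos_of_nonneg_of_nonpos htp.le h2
      simp only [eval_mul] at *
      linarith
    rw [eval_mul] at h3
    nlinarith
  · set f := p * derivative q - derivative p * q with hf
    rcases eq_or_ne f 0 with h0 | h0
    · left; rw [GiesekerLE, ← hf, h0]; simp
    · rcases lt_or_ge 0 f.leadingCoeff with hl | hl
      · right
        have := eventually_pos_of_leadingCoeff_pos f hl
        filter_upwards [this] with t ht
        have : (q * derivative p - derivative q * p) = -f := by rw [hf]; ring
        rw [this, eval_neg]
        linarith
      · left
        have hl' : 0 < (-f).leadingCoeff := by
          rw [leadingCoeff_neg]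
          rcases hl.lt_or_eq with h | h
          · linarith
          · exact absurd (leadingCoeff_eq_zero.mp h) h0
        have := eventually_pos_of_leadingCoeff_pos (-f) hl'
        filter_upwards [this] with t ht
        rw [eval_neg] at ht
        rw [← hf]
        linarith
end

section
/- Let d be a natural number and let M = (M_{ij})_{0 ≤ i,j ≤ d} be a real matrix with M_{ij} = 0 whenever j < i and with M_{ii} > 0 for every i. For real polynomials p = Σ_{i=0}^d a_i t^i and q = Σ_{i=0}^d b_i t^i of degree at most d, define p̃ = Σ_{i=0}^d (Σ_{j ≥ i} M_{ij} a_j) t^i and q̃ = Σ_{i=0}^d (Σ_{j ≥ i} M_{ij} b_j) t^i. Then (p·q′ − p′·q)(t) ≤ 0 for all sufficiently large real t if and only if (p̃·q̃′ − p̃′·q̃)(t) ≤ 0 for all sufficiently large real t. -/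
open Polynomial Filter


lemma evNonposIff (r : Polynomial ℝ) :
    (∀ᶠ t : ℝ in atTop, r.eval t ≤ 0) ↔ r.leadingCoeff ≤ 0 := by
  rcases le_or_gt r.degree 0 with h | h
  · obtain ⟨c, rfl⟩ : ∃ c, r = C c := ⟨r.coeff 0, (Polynomial.eq_C_of_degree_le_zero h)⟩
    simp only [eval_C, leadingCoeff_C]
    constructor
    · intro h'; obtain ⟨t, ht⟩ := h'.exists; exact ht
    · intro h'; exact Eventually.of_forall fun _ => h'
  · constructor
    · intro h'
      by_contra hlc
      push_neg at hlc
      have h2 := (r.tendsto_atTop_of_leadingCoeff_nonneg h hlc.le).eventually_ge_atTop 1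
      obtain ⟨t, ht1, ht2⟩ := (h'.and h2).exists
      linarith
    · intro hlc
      exact (r.tendsto_atBot_of_leadingCoeff_nonpos h hlc).eventually_le_atBot 0

lemma W_sub_C_mul (x y : Polynomial ℝ) (lam : ℝ) :
    x * derivative (y - C lam * x) - derivative x * (y - C lam * x)
      = x * derivative y - derivative x * y := by
  simp only [derivative_sub, derivative_mul, derivative_C]
  ring

lemma lcW_lt {p q : Polynomial ℝ} (hp : p ≠ 0) (hq : q ≠ 0)
    (h : p.natDegree < q.natDegree) :
    (p * derivative q - derivative p * q).natDegree = p.natDegree + q.natDegree - 1 ∧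
    (p * derivative q - derivative p * q).leadingCoeff
      = ((q.natDegree : ℝ) - (p.natDegree : ℝ)) * (p.leadingCoeff * q.leadingCoeff) := by
  have hn1 : 1 ≤ q.natDegree := by omega
  have hk : p.natDegree + q.natDegree - 1 = p.natDegree + (q.natDegree - 1) := by omega
  have hdq : (derivative q).natDegree = q.natDegree - 1 :=
    natDegree_eq_of_degree_eq_some (degree_derivative_eq q (by omega))
  have hcoeffq' : (derivative q).leadingCoeff = q.leadingCoeff * q.natDegree := by
    rw [leadingCoeff, hdq, coeff_derivative, Nat.sub_add_cancel hn1, Nat.cast_sub hn1]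
    push_cast
    rw [leadingCoeff]
    ring
  have h1 : (p * derivative q).coeff (p.natDegree + q.natDegree - 1)
      = p.leadingCoeff * (q.leadingCoeff * q.natDegree) := by
    rw [hk, ← hdq, coeff_mul_degree_add_degree, hcoeffq']
  have h2 : (derivative p * q).coeff (p.natDegree + q.natDegree - 1)
      = (p.leadingCoeff * p.natDegree) * q.leadingCoeff := by
    rcases Nat.eq_zero_or_pos p.natDegree with hm0 | hm0
    · obtain ⟨c, rfl⟩ := natDegree_eq_zero.mp hm0
      simp [hm0]
    · have hm1 : 1 ≤ p.natDegree := hm0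
      have hdp : (derivative p).natDegree = p.natDegree - 1 :=
        natDegree_eq_of_degree_eq_some (degree_derivative_eq p (by omega))
      have hcp' : (derivative p).leadingCoeff = p.leadingCoeff * p.natDegree := by
        rw [leadingCoeff, hdp, coeff_derivative, Nat.sub_add_cancel hm1, Nat.cast_sub hm1]
        push_cast
        rw [leadingCoeff]
        ring
      have hk' : p.natDegree + q.natDegree - 1 = (p.natDegree - 1) + q.natDegree := by omega
      rw [hk', ← hdp, coeff_mul_degree_add_degree, hcp']
  have hco : (p * derivative q - derivative p * q).coeff (p.natDegree + q.natDegree - 1)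
      = ((q.natDegree : ℝ) - (p.natDegree : ℝ)) * (p.leadingCoeff * q.leadingCoeff) := by
    rw [coeff_sub, h1, h2]; ring
  have hne : (p * derivative q - derivative p * q).coeff (p.natDegree + q.natDegree - 1) ≠ 0 := by
    rw [hco]
    have h1 : (0:ℝ) < (q.natDegree : ℝ) - (p.natDegree : ℝ) := by
      have : (p.natDegree:ℝ) < q.natDegree := by exact_mod_cast h
      linarith
    have h2 : p.leadingCoeff ≠ 0 := leadingCoeff_ne_zero.mpr hp
    have h3 : q.leadingCoeff ≠ 0 := leadingCoeff_ne_zero.mpr hq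
    positivity
  have hle : (p * derivative q - derivative p * q).natDegree
      ≤ p.natDegree + q.natDegree - 1 := by
    refine le_trans (natDegree_sub_le _ _) (max_le ?_ ?_)
    · refine le_trans (natDegree_mul_le) ?_
      have := natDegree_derivative_le q
      omega
    · rcases Nat.eq_zero_or_pos p.natDegree with hm0 | hm0
      · obtain ⟨c, rfl⟩ := natDegree_eq_zero.mp hm0
        simp
      · refine le_trans (natDegree_mul_le) ?_
        have := natDegree_derivative_le p
        omega
  have hdeg : (p * derivative q - derivative p * q).natDegree
      = p.natDegree + q.natDegree - 1 :=
    le_antisymm hle (le_natDegree_of_ne_zero hne)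
  exact ⟨hdeg, by rw [leadingCoeff, hdeg, hco]⟩

lemma lcW_ne {p q : Polynomial ℝ} (hp : p ≠ 0) (hq : q ≠ 0)
    (h : p.natDegree ≠ q.natDegree) :
    (p * derivative q - derivative p * q).leadingCoeff
      = ((q.natDegree : ℝ) - (p.natDegree : ℝ)) * (p.leadingCoeff * q.leadingCoeff) := by
  rcases h.lt_or_gt with h' | h'
  · exact (lcW_lt hp hq h').2
  · have key := (lcW_lt hq hp h').2
    have hsw : p * derivative q - derivative p * q
        = -(q * derivative p - derivative q * p) := by ring
    rw [hsw, leadingCoeff_neg, key]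
    ring
lemma key_induction (d : ℕ) (L : Polynomial ℝ → Polynomial ℝ) (c : ℕ → ℝ)
    (hc : ∀ i, 0 < c i) (hL0 : L 0 = 0)
    (hLred : ∀ x y : Polynomial ℝ, ∀ lam : ℝ, L (y - C lam * x) = L y - C lam * L x)
    (hdegL : ∀ p : Polynomial ℝ, p ≠ 0 → p.natDegree ≤ d → (L p).natDegree = p.natDegree)
    (hlcL : ∀ p : Polynomial ℝ, p ≠ 0 → p.natDegree ≤ d →
      (L p).leadingCoeff = c p.natDegree * p.leadingCoeff) :
    ∀ N : ℕ, ∀ p q : Polynomial ℝ, p.natDegree + q.natDegree ≤ N →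
      p.natDegree ≤ d → q.natDegree ≤ d →
      ∃ μ : ℝ, 0 < μ ∧
        (L p * derivative (L q) - derivative (L p) * L q).leadingCoeff
          = μ * (p * derivative q - derivative p * q).leadingCoeff := by
  intro N
  induction N using Nat.strong_induction_on with
  | _ N IH =>
    intro p q hN hpd hqd
    by_cases hp : p = 0
    · subst hp; simp only [hL0]; exact ⟨1, one_pos, by simp⟩
    by_cases hq : q = 0
    · subst hq; simp only [hL0]; exact ⟨1, one_pos, by simp⟩
    have hLp : (L p) ≠ 0 := by
      have h1 : (L p).leadingCoeff ≠ 0 := by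
        rw [hlcL p hp hpd]
        exact mul_ne_zero (hc _).ne' (leadingCoeff_ne_zero.mpr hp)
      exact fun h0 => h1 (by simp [h0])
    have hLq : (L q) ≠ 0 := by
      have h1 : (L q).leadingCoeff ≠ 0 := by
        rw [hlcL q hq hqd]
        exact mul_ne_zero (hc _).ne' (leadingCoeff_ne_zero.mpr hq)
      exact fun h0 => h1 (by simp [h0])
    by_cases hmn : p.natDegree = q.natDegree
    case neg =>
      -- distinct degrees: direct formula
      refine ⟨c p.natDegree * c q.natDegree,
        mul_pos (hc _) (hc _), ?_⟩
      rw [lcW_ne hp hq hmn, lcW_ne hLp hLq (by rw [hdegL p hp hpd, hdegL q hq hqd]; exact hmn),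
        hdegL p hp hpd, hdegL q hq hqd, hlcL p hp hpd, hlcL q hq hqd]
      ring
    case pos =>
      -- equal degrees: reduce
      set lam : ℝ := q.leadingCoeff / p.leadingCoeff with hlam
      set q₁ : Polynomial ℝ := q - C lam * p with hq₁
      have hWred : p * derivative q₁ - derivative p * q₁
          = p * derivative q - derivative p * q := W_sub_C_mul p q lam
      have hLWred : L p * derivative (L q₁) - derivative (L p) * (L q₁)
          = L p * derivative (L q) - derivative (L p) * (L q) := by
        rw [hq₁, hLred p q lam]
        exact W_sub_C_mul (L p) (L q) lam
      have hcoeffzero : q₁.coeff p.natDegree = 0 := by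
        have hane : p.leadingCoeff ≠ 0 := leadingCoeff_ne_zero.mpr hp
        have h1 : q.coeff p.natDegree = q.leadingCoeff := by rw [hmn, coeff_natDegree]
        have h2 : p.coeff p.natDegree = p.leadingCoeff := coeff_natDegree
        rw [hq₁, coeff_sub, coeff_C_mul, h1, h2, hlam, div_mul_cancel₀ _ hane, sub_self]
      by_cases hq10 : q₁ = 0
      · refine ⟨1, one_pos, ?_⟩
        rw [← hWred, ← hLWred, hq10]
        simp [hL0]
      · have hdq1 : q₁.natDegree < q.natDegree := by
          have hle : q₁.natDegree ≤ p.natDegree := by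
            refine le_trans (natDegree_sub_le _ _) (max_le (le_of_eq hmn.symm) ?_)
            exact le_trans natDegree_mul_le (by simp)
          have hne : q₁.natDegree ≠ p.natDegree := by
            intro he
            exact leadingCoeff_ne_zero.mpr hq10 (by rw [leadingCoeff, he, hcoeffzero])
          omega
        obtain ⟨μ, hμ, hμeq⟩ := IH (p.natDegree + q₁.natDegree) (by omega) p q₁ le_rfl hpd
          (le_trans hdq1.le hqd)
        exact ⟨μ, hμ, by rw [← hWred, ← hLWred, hμeq]⟩


lemma coeff_basis_sum (d : ℕ) (f : Fin (d + 1) → ℝ) (k : ℕ) :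
    (∑ i : Fin (d + 1), C (f i) * X ^ (i : ℕ)).coeff k
      = if h : k < d + 1 then f ⟨k, h⟩ else 0 := by
  classical
  rw [finset_sum_coeff]
  simp only [coeff_C_mul, coeff_X_pow, mul_ite, mul_one, mul_zero]
  split_ifs with h
  · rw [Finset.sum_eq_single (⟨k, h⟩ : Fin (d + 1))]
    · simp
    · intro i _ hne
      rw [if_neg]
      exact fun he => hne (Fin.ext he.symm)
    · simp
  · apply Finset.sum_eq_zero
    intro i _
    rw [if_neg]
    exact fun he => h (by rw [he]; exact i.isLt)

noncomputable def Ldef (d : ℕ) (M : Fin (d + 1) → Fin (d + 1) → ℝ) (p : Polynomial ℝ) :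
    Polynomial ℝ :=
  ∑ i : Fin (d + 1),
    C (∑ j ∈ Finset.univ.filter (fun j => i ≤ j), M i j * p.coeff j) * X ^ (i : ℕ)

lemma Ldef_coeff (d : ℕ) (M : Fin (d + 1) → Fin (d + 1) → ℝ) (p : Polynomial ℝ) (k : ℕ) :
    (Ldef d M p).coeff k
      = if h : k < d + 1 then
          ∑ j ∈ Finset.univ.filter (fun j => (⟨k, h⟩ : Fin (d + 1)) ≤ j), M ⟨k, h⟩ j * p.coeff j
        else 0 :=
  coeff_basis_sum d _ k

lemma Ldef_zero (d : ℕ) (M : Fin (d + 1) → Fin (d + 1) → ℝ) : Ldef d M 0 = 0 := by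
  simp [Ldef]

lemma Ldef_red (d : ℕ) (M : Fin (d + 1) → Fin (d + 1) → ℝ) (x y : Polynomial ℝ) (lam : ℝ) :
    Ldef d M (y - C lam * x) = Ldef d M y - C lam * Ldef d M x := by
  unfold Ldef
  rw [Finset.mul_sum, ← Finset.sum_sub_distrib]
  refine Finset.sum_congr rfl fun i _ => ?_
  have hin : (∑ j ∈ Finset.univ.filter (fun j => i ≤ j), M i j * (y - C lam * x).coeff j)
      = (∑ j ∈ Finset.univ.filter (fun j => i ≤ j), M i j * y.coeff j)
        - lam * (∑ j ∈ Finset.univ.filter (fun j => i ≤ j), M i j * x.coeff j) := by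
    rw [Finset.mul_sum, ← Finset.sum_sub_distrib]
    refine Finset.sum_congr rfl fun j _ => ?_
    rw [coeff_sub, coeff_C_mul]
    ring
  rw [hin, C_sub, C_mul, sub_mul, mul_assoc]

lemma Ldef_deg_lc (d : ℕ) (M : Fin (d + 1) → Fin (d + 1) → ℝ)
    (hMdiag : ∀ i, 0 < M i i) (p : Polynomial ℝ) (hp : p ≠ 0) (hpd : p.natDegree ≤ d) :
    (Ldef d M p).natDegree = p.natDegree ∧
    (Ldef d M p).leadingCoeff
      = M ⟨p.natDegree, by omega⟩ ⟨p.natDegree, by omega⟩ * p.leadingCoeff := by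
  have hmd : p.natDegree < d + 1 := by omega
  set mF : Fin (d + 1) := ⟨p.natDegree, hmd⟩ with hmF
  have htop : (Ldef d M p).coeff p.natDegree = M mF mF * p.leadingCoeff := by
    rw [Ldef_coeff, dif_pos hmd]
    rw [Finset.sum_eq_single mF]
    · rw [← hmF, leadingCoeff]
    · intro j hj hne
      have hlt : p.natDegree < (j : ℕ) := by
        have h1 : p.natDegree ≤ (j : ℕ) := (Finset.mem_filter.mp hj).2
        have h2 : p.natDegree ≠ (j : ℕ) := fun he => hne (Fin.ext he.symm)
        omega
      rw [coeff_eq_zero_of_natDegree_lt hlt, mul_zero]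
    · intro hnotmem
      exact absurd (Finset.mem_filter.mpr ⟨Finset.mem_univ _, le_refl _⟩) hnotmem
  have hhigh : ∀ k, p.natDegree < k → (Ldef d M p).coeff k = 0 := by
    intro k hk
    rw [Ldef_coeff]
    split_ifs with h
    · apply Finset.sum_eq_zero
      intro j hj
      have hle : ((⟨k, h⟩ : Fin (d + 1)) : ℕ) ≤ (j : ℕ) := (Finset.mem_filter.mp hj).2
      have : p.natDegree < (j : ℕ) := by simpa using lt_of_lt_of_le hk hle
      rw [coeff_eq_zero_of_natDegree_lt this, mul_zero]
    · rfl
  have htopne : (Ldef d M p).coeff p.natDegree ≠ 0 := by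
    rw [htop]
    exact mul_ne_zero (hMdiag mF).ne' (leadingCoeff_ne_zero.mpr hp)
  have hdeg : (Ldef d M p).natDegree = p.natDegree :=
    le_antisymm (natDegree_le_iff_coeff_eq_zero.mpr hhigh) (le_natDegree_of_ne_zero htopne)
  exact ⟨hdeg, by rw [leadingCoeff, hdeg, htop]⟩

/-- Polynomial stability is unchanged when each coefficient `a_i` is
replaced by a constant real combination `Σ_{j ≥ i} M_{ij} a_j` with `M` upper triangular
and `M_{ii} > 0`: for `p = Σ a_i t^i`, `q = Σ b_i t^i` of degree at most `d` and the
transformed polynomials `p̃`, `q̃`, we have `(p q' - p' q)(t) ≤ 0` eventually iff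
`(p̃ q̃' - p̃' q̃)(t) ≤ 0` eventually. -/
theorem stability_invariant_under_triangular_transform (d : ℕ)
    (M : Fin (d + 1) → Fin (d + 1) → ℝ)
    (hM0 : ∀ i j, j < i → M i j = 0) (hMdiag : ∀ i, 0 < M i i)
    (a b : Fin (d + 1) → ℝ) :
    let p : Polynomial ℝ := ∑ i, Polynomial.C (a i) * Polynomial.X ^ (i : ℕ)
    let q : Polynomial ℝ := ∑ i, Polynomial.C (b i) * Polynomial.X ^ (i : ℕ)
    let pt : Polynomial ℝ := ∑ i,
      Polynomial.C (∑ j ∈ Finset.univ.filter (fun j => i ≤ j), M i j * a j) *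
        Polynomial.X ^ (i : ℕ)
    let qt : Polynomial ℝ := ∑ i,
      Polynomial.C (∑ j ∈ Finset.univ.filter (fun j => i ≤ j), M i j * b j) *
        Polynomial.X ^ (i : ℕ)
    ((∀ᶠ t : ℝ in atTop,
        (p * derivative q - derivative p * q).eval t ≤ 0) ↔
      (∀ᶠ t : ℝ in atTop,
        (pt * derivative qt - derivative pt * qt).eval t ≤ 0)) := by
  intro p q pt qt
  have hcoe : ∀ (f : Fin (d + 1) → ℝ) (j : Fin (d + 1)),
      (∑ i : Fin (d + 1), C (f i) * X ^ (i : ℕ)).coeff (j : ℕ) = f j := by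
    intro f j
    rw [coeff_basis_sum, dif_pos j.isLt]
  have hdegle : ∀ f : Fin (d + 1) → ℝ,
      (∑ i : Fin (d + 1), C (f i) * X ^ (i : ℕ)).natDegree ≤ d := by
    intro f
    refine natDegree_le_iff_coeff_eq_zero.mpr fun k hk => ?_
    rw [coeff_basis_sum, dif_neg (by omega)]
  have hpc : ∀ j : Fin (d + 1), p.coeff (j : ℕ) = a j := hcoe a
  have hqc : ∀ j : Fin (d + 1), q.coeff (j : ℕ) = b j := hcoe b
  have hpt : pt = Ldef d M p := by
    show (∑ i : Fin (d + 1),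
      C (∑ j ∈ Finset.univ.filter (fun j => i ≤ j), M i j * a j) * X ^ (i : ℕ)) = _
    unfold Ldef
    refine Finset.sum_congr rfl fun i _ => ?_
    congr 1
    refine congrArg C (Finset.sum_congr rfl fun j _ => ?_)
    rw [hpc j]
  have hqt : qt = Ldef d M q := by
    show (∑ i : Fin (d + 1),
      C (∑ j ∈ Finset.univ.filter (fun j => i ≤ j), M i j * b j) * X ^ (i : ℕ)) = _
    unfold Ldef
    refine Finset.sum_congr rfl fun i _ => ?_
    congr 1
    refine congrArg C (Finset.sum_congr rfl fun j _ => ?_)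
    rw [hqc j]
  have hpd : p.natDegree ≤ d := hdegle a
  have hqd : q.natDegree ≤ d := hdegle b
  set cfun : ℕ → ℝ := fun k => if h : k < d + 1 then M ⟨k, h⟩ ⟨k, h⟩ else 1 with hcfun
  have hcpos : ∀ i, 0 < cfun i := by
    intro i
    rw [hcfun]
    dsimp only
    split_ifs with h
    · exact hMdiag _
    · exact one_pos
  obtain ⟨μ, hμpos, hμeq⟩ := key_induction d (Ldef d M) cfun hcpos (Ldef_zero d M)
    (Ldef_red d M)
    (fun r hr hrd => (Ldef_deg_lc d M hMdiag r hr hrd).1)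
    (fun r hr hrd => by
      rw [(Ldef_deg_lc d M hMdiag r hr hrd).2, hcfun]
      dsimp only
      rw [dif_pos (by omega : r.natDegree < d + 1)])
    (p.natDegree + q.natDegree) p q le_rfl hpd hqd
  rw [evNonposIff, evNonposIff, hpt, hqt, hμeq]
  constructor
  · intro h; nlinarith
  · intro h; nlinarith
end

section
/- Let I be a finite set and let d : I → ℕ be a primitive vector (the greatest common divisor of the d_i is 1). Let θ⁰, …, θᵏ ∈ ℝ^I satisfy θʲ · d = 0 for every j, and suppose the linear span of θ⁰, …, θᵏ in ℝ^I has dimension at least |I| − 1. Then for every d′ : I → ℕ with d′_i ≤ d_i for all i and d′ ∉ {0, d}, there exists some j with θʲ · d′ ≠ 0 (i.e. d is θ-coprime for the polynomial array θ = Σ_j θʲ tʲ). -/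
/-!
By rank–nullity the vectors orthogonal to every `θʲ` form a line, and it contains `d`; so a
`θ`-orthogonal `d'` is a real multiple `c • d`. Pairing with a Bézout vector `a` of the primitive
`d` (`∑ aᵢ dᵢ = 1`) gives `c = ∑ aᵢ d'ᵢ ∈ ℤ`, and `0 < d' ≤ d` then forces `c = 1`.
-/

open Module

theorem exists_eq_smul_of_dotProduct_eq_zero {K m n : Type*} [Field K] [Finite m] [Fintype n]
    (θ : m → n → K) (hspan : Fintype.card n - 1 ≤ finrank K (Submodule.span K (Set.range θ)))
    {x y : n → K} (hx : x ≠ 0) (hθx : ∀ j, θ j ⬝ᵥ x = 0) (hθy : ∀ j, θ j ⬝ᵥ y = 0) :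
    ∃ c : K, y = c • x := by
  set A : Matrix m n K := Matrix.of θ
  have hrank : A.rank = finrank K (Submodule.span K (Set.range θ)) :=
    A.rank_eq_finrank_span_row
  let v : LinearMap.ker A.mulVecLin := ⟨x, funext hθx⟩
  have hv : v ≠ 0 := fun h => hx (congrArg Subtype.val h)
  have hker : finrank K (LinearMap.ker A.mulVecLin) = 1 := by
    have hsum := LinearMap.finrank_range_add_finrank_ker A.mulVecLin
    have hpos : 0 < finrank K (LinearMap.ker A.mulVecLin) :=
      finrank_pos_iff_exists_ne_zero.mpr ⟨v, hv⟩
    rw [Module.finrank_fintype_fun_eq_card] at hsum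
    change A.rank + _ = _ at hsum
    omega
  obtain ⟨c, hc⟩ := (finrank_eq_one_iff_of_nonzero' v hv).mp hker ⟨y, funext hθy⟩
  exact ⟨c, congrArg Subtype.val hc.symm⟩

theorem Finset.exists_sum_natCast_mul_eq_one {ι : Type*} {s : Finset ι} {d : ι → ℕ}
    (hd : s.gcd d = 1) : ∃ a : ι → ℤ, ∑ i ∈ s, (d i : ℤ) * a i = 1 := by
  obtain ⟨a, ha⟩ := s.gcd_eq_sum_mul fun i => (d i : ℤ)
  have hdvd : (s.gcd fun i => (d i : ℤ)).natAbs ∣ s.gcd d :=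
    Finset.dvd_gcd fun i hi => Int.natAbs_dvd_natAbs.mpr (Finset.gcd_dvd hi)
  rw [hd, Nat.dvd_one] at hdvd
  have hg : (s.gcd fun i => (d i : ℤ)) = 1 := by
    have := Int.finsetGcd_nonneg (s := s) (f := fun i => (d i : ℤ))
    omega
  exact ⟨a, ha ▸ hg⟩

theorem exists_int_eq_of_natCast_eq_mul {ι : Type*} [Fintype ι] {d d' : ι → ℕ}
    (hd : Finset.univ.gcd d = 1) {c : ℝ} (hc : ∀ i, (d' i : ℝ) = c * d i) :
    ∃ n : ℤ, c = n := by
  obtain ⟨a, ha⟩ := Finset.exists_sum_natCast_mul_eq_one hd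
  refine ⟨∑ i, (d' i : ℤ) * a i, ?_⟩
  calc c = c * ((∑ i, (d i : ℤ) * a i : ℤ) : ℝ) := by rw [ha]; simp
    _ = _ := by push_cast; simp [Finset.mul_sum, hc, mul_assoc]

theorem eq_of_le_of_natCast_eq_mul {ι : Type*} [Fintype ι] {d d' : ι → ℕ}
    (hd : Finset.univ.gcd d = 1) (hle : d' ≤ d) (hne : d' ≠ 0) {c : ℝ}
    (hc : ∀ i, (d' i : ℝ) = c * d i) : d' = d := by
  obtain ⟨n, rfl⟩ := exists_int_eq_of_natCast_eq_mul hd hc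
  obtain ⟨i, hi⟩ := Function.ne_iff.mp hne
  have hpos : (0 : ℝ) < d' i := by simpa [Nat.pos_iff_ne_zero] using hi
  have hle' : (d' i : ℝ) ≤ d i := by exact_mod_cast hle i
  have hn : n = 1 := by
    have h0 : 0 < n := by exact_mod_cast (by nlinarith [hc i] : (0 : ℝ) < n)
    have h1 : n ≤ 1 := by exact_mod_cast (by nlinarith [hc i] : (n : ℝ) ≤ 1)
    omega
  funext j
  exact_mod_cast (by simpa [hn] using hc j : (d' j : ℝ) = d j)

/-- If `d ∈ ℕ^I` is primitive, the arrays `θ⁰, …, θᵏ ∈ ℝ^I` satisfy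
`θʲ·d = 0` for all `j` and span a subspace of dimension at least `|I| - 1`, then `d` is
`θ`-coprime: for every `d' ∈ ℕ^I` with `d' ≤ d`, `d' ≠ 0`, `d' ≠ d` there is some `j`
with `θʲ·d' ≠ 0`. -/
theorem theta_coprime_of_primitive {I : Type} [Fintype I]
    (d : I → ℕ) (hprim : Finset.univ.gcd d = 1)
    (k : ℕ) (θ : Fin (k + 1) → I → ℝ)
    (horth : ∀ j, ∑ i, θ j i * (d i : ℝ) = 0)
    (hspan : Fintype.card I - 1 ≤
      Module.finrank ℝ ↥(Submodule.span ℝ (Set.range θ))) :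
    ∀ d' : I → ℕ, (∀ i, d' i ≤ d i) → d' ≠ 0 → d' ≠ d →
      ∃ j, ∑ i, θ j i * (d' i : ℝ) ≠ 0 := by
  intro d' hle hne0 hned
  by_contra! horth'
  have hd : (fun i => (d i : ℝ)) ≠ 0 := fun h => hne0 <| funext fun i =>
    Nat.eq_zero_of_le_zero <| (hle i).trans (by simpa using congrFun h i)
  obtain ⟨c, hc⟩ := exists_eq_smul_of_dotProduct_eq_zero θ hspan hd horth horth'
  exact hned (eq_of_le_of_natCast_eq_mul hprim hle hne0 fun i => congrFun hc i)
end

section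
/- Let n ≥ 1 and let (V₋₁, V₀, f₁, …, f_n) be a representation of the n-arrow Kronecker quiver K_n with dim V₋₁ ≥ 1 and dim V₀ ≥ 1. If dim V₀ > n · dim V₋₁ or dim V₋₁ > n · dim V₀, then the representation is not semistable. -/
/-- A subrepresentation of a representation `f : Fin n → (V₁ →ₗ[ℂ] V₀)` of the `n`-arrow
Kronecker quiver: a pair of subspaces stable under all the maps. -/
def KroneckerSubrep {n : ℕ} {V₁ V₀ : Type} [AddCommGroup V₁] [Module ℂ V₁]
    [AddCommGroup V₀] [Module ℂ V₀] (f : Fin n → V₁ →ₗ[ℂ] V₀)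
    (W₁ : Submodule ℂ V₁) (W₀ : Submodule ℂ V₀) : Prop :=
  ∀ i, ∀ x ∈ W₁, f i x ∈ W₀

/-- Semistability of a representation of the `n`-arrow Kronecker quiver: every
subrepresentation `(W₁, W₀)` satisfies `dim V₁ · dim W₀ - dim V₀ · dim W₁ ≥ 0`. -/
def KroneckerSemistable {n : ℕ} {V₁ V₀ : Type} [AddCommGroup V₁] [Module ℂ V₁]
    [AddCommGroup V₀] [Module ℂ V₀] (f : Fin n → V₁ →ₗ[ℂ] V₀) : Prop :=
  ∀ (W₁ : Submodule ℂ V₁) (W₀ : Submodule ℂ V₀), KroneckerSubrep f W₁ W₀ →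
    0 ≤ (Module.finrank ℂ V₁ : ℤ) * (Module.finrank ℂ ↥W₀ : ℤ) -
        (Module.finrank ℂ V₀ : ℤ) * (Module.finrank ℂ ↥W₁ : ℤ)

/-- A representation of the `n`-arrow Kronecker quiver on nonzero
finite-dimensional spaces `V₁`, `V₀` with `dim V₀ > n · dim V₁` or `dim V₁ > n · dim V₀`
is not semistable. -/
theorem not_semistable_of_dim_ratio (n : ℕ) (hn : 1 ≤ n)
    (V₁ V₀ : Type) [AddCommGroup V₁] [Module ℂ V₁] [FiniteDimensional ℂ V₁]
    [AddCommGroup V₀] [Module ℂ V₀] [FiniteDimensional ℂ V₀]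
    (f : Fin n → V₁ →ₗ[ℂ] V₀)
    (h1 : 1 ≤ Module.finrank ℂ V₁) (h0 : 1 ≤ Module.finrank ℂ V₀)
    (h : n * Module.finrank ℂ V₁ < Module.finrank ℂ V₀ ∨
         n * Module.finrank ℂ V₀ < Module.finrank ℂ V₁) :
    ¬ KroneckerSemistable f := by
  intro hs
  rcases h with h | h
  · -- take W₁ = ⊤, W₀ = range of the combined map (Fin n → V₁) → V₀
    set g : (Fin n → V₁) →ₗ[ℂ] V₀ := ∑ i, (f i).comp (LinearMap.proj i) with hg
    have hsub : KroneckerSubrep f ⊤ (LinearMap.range g) := by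
      intro i x _
      refine ⟨Pi.single i x, ?_⟩
      simp only [hg, LinearMap.sum_apply, LinearMap.comp_apply, LinearMap.proj_apply]
      rw [Finset.sum_eq_single i]
      · simp
      · intro j _ hj; simp [Pi.single_eq_of_ne hj]
      · simp
    have hW0 : Module.finrank ℂ (LinearMap.range g) ≤ n * Module.finrank ℂ V₁ := by
      calc Module.finrank ℂ (LinearMap.range g) ≤ Module.finrank ℂ (Fin n → V₁) :=
            LinearMap.finrank_range_le g
        _ = n * Module.finrank ℂ V₁ := by
            rw [Module.finrank_pi_fintype]; simp [Finset.sum_const, Fintype.card_fin]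
    have := hs ⊤ (LinearMap.range g) hsub
    rw [finrank_top] at this
    have hlt : (Module.finrank ℂ V₁ : ℤ) * (Module.finrank ℂ (LinearMap.range g) : ℤ) <
        (Module.finrank ℂ V₀ : ℤ) * (Module.finrank ℂ V₁ : ℤ) := by
      have h1' : (1 : ℤ) ≤ (Module.finrank ℂ V₁ : ℤ) := by exact_mod_cast h1
      have : (Module.finrank ℂ (LinearMap.range g) : ℤ) < (Module.finrank ℂ V₀ : ℤ) := by
        exact_mod_cast lt_of_le_of_lt hW0 h
      nlinarith
    omega
  · -- take W₁ = kernel of combined map V₁ → (Fin n → V₀), W₀ = ⊥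
    set g : V₁ →ₗ[ℂ] (Fin n → V₀) := LinearMap.pi (fun i => f i) with hg
    have hsub : KroneckerSubrep f (LinearMap.ker g) ⊥ := by
      intro i x hx
      have : g x = 0 := hx
      have : f i x = 0 := by
        have := congrFun this i
        simpa [hg] using this
      simp [this]
    have hker : Module.finrank ℂ V₁ ≤
        Module.finrank ℂ (LinearMap.ker g) + n * Module.finrank ℂ V₀ := by
      have hrn := LinearMap.finrank_range_add_finrank_ker g
      have hrange : Module.finrank ℂ (LinearMap.range g) ≤ n * Module.finrank ℂ V₀ := by
        calc Module.finrank ℂ (LinearMap.range g) ≤ Module.finrank ℂ (Fin n → V₀) :=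
              Submodule.finrank_le _
          _ = n * Module.finrank ℂ V₀ := by
              rw [Module.finrank_pi_fintype]; simp [Finset.sum_const, Fintype.card_fin]
      omega
    have hpos : 1 ≤ Module.finrank ℂ (LinearMap.ker g) := by omega
    have := hs (LinearMap.ker g) ⊥ hsub
    rw [finrank_bot] at this
    push_cast at this
    have h0' : (1 : ℤ) ≤ (Module.finrank ℂ V₀ : ℤ) := by exact_mod_cast h0
    have hpos' : (1 : ℤ) ≤ (Module.finrank ℂ (LinearMap.ker g) : ℤ) := by exact_mod_cast hpos
    nlinarith
end

section
/- Let m ≥ 1 and let (V₋₁, V₀, f₀, f₁) be a representation of the Kronecker quiver K₂ with dim V₋₁ = m and dim V₀ = 2m. Then the representation is semistable if and only if f₀ and f₁ are both injective and V₀ is the internal direct sum of f₀(V₋₁) and f₁(V₋₁), i.e. f₀(V₋₁) ∩ f₁(V₋₁) = 0 and f₀(V₋₁) + f₁(V₋₁) = V₀. -/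
lemma aux_inj {m : ℕ} (hm : 1 ≤ m) {V₁ V₀ : Type} [AddCommGroup V₁] [Module ℂ V₁]
    [FiniteDimensional ℂ V₁] [AddCommGroup V₀] [Module ℂ V₀] [FiniteDimensional ℂ V₀]
    (f : Fin 2 → V₁ →ₗ[ℂ] V₀)
    (h1 : Module.finrank ℂ V₁ = m) (h0 : Module.finrank ℂ V₀ = 2 * m)
    (hss : KroneckerSemistable f) (i j : Fin 2) (hij : j ≠ i) :
    Function.Injective (f i) := by
  rw [← LinearMap.ker_eq_bot]
  set K := LinearMap.ker (f i)
  have hsub : KroneckerSubrep f K (K.map (f j)) := by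
    intro k x hx
    rcases eq_or_ne k i with rfl | hk
    · have : f k x = 0 := hx
      simp [this]
    · have : k = j := by omega
      subst this
      exact Submodule.mem_map_of_mem hx
  have hle : Module.finrank ℂ (K.map (f j)) ≤ Module.finrank ℂ K :=
    Submodule.finrank_map_le _ _
  have := hss K (K.map (f j)) hsub
  rw [h1, h0] at this
  have hK : Module.finrank ℂ K = 0 := by
    push_cast at this; nlinarith
  exact Submodule.finrank_eq_zero.mp hK

/-- A representation `(f₀, f₁)` of the Kronecker quiver `K₂` of
dimension vector `(m, 2m)` is semistable iff `f₀` and `f₁` are injective and `V₀` is the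
internal direct sum of their images. -/
theorem semistable_iff_injective_and_complementary (m : ℕ) (hm : 1 ≤ m)
    (V₁ V₀ : Type) [AddCommGroup V₁] [Module ℂ V₁] [FiniteDimensional ℂ V₁]
    [AddCommGroup V₀] [Module ℂ V₀] [FiniteDimensional ℂ V₀]
    (f : Fin 2 → V₁ →ₗ[ℂ] V₀)
    (h1 : Module.finrank ℂ V₁ = m) (h0 : Module.finrank ℂ V₀ = 2 * m) :
    KroneckerSemistable f ↔
      (Function.Injective (f 0) ∧ Function.Injective (f 1) ∧
        LinearMap.range (f 0) ⊓ LinearMap.range (f 1) = ⊥ ∧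
        LinearMap.range (f 0) ⊔ LinearMap.range (f 1) = ⊤) := by
  constructor
  · intro hss
    have hi0 : Function.Injective (f 0) := aux_inj hm f h1 h0 hss 0 1 (by decide)
    have hi1 : Function.Injective (f 1) := aux_inj hm f h1 h0 hss 1 0 (by decide)
    -- sup is top
    have hsub : KroneckerSubrep f ⊤ (LinearMap.range (f 0) ⊔ LinearMap.range (f 1)) := by
      intro k x _
      fin_cases k
      · exact Submodule.mem_sup_left (LinearMap.mem_range_self _ x)
      · exact Submodule.mem_sup_right (LinearMap.mem_range_self _ x)
    have := hss ⊤ _ hsub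
    rw [h1, h0, finrank_top, h1] at this
    have hle : Module.finrank ℂ ↥(LinearMap.range (f 0) ⊔ LinearMap.range (f 1)) ≤ 2 * m := by
      rw [← h0]; exact Submodule.finrank_le _
    have hdim : Module.finrank ℂ ↥(LinearMap.range (f 0) ⊔ LinearMap.range (f 1)) = 2 * m := by
      push_cast at this; nlinarith
    have htop : LinearMap.range (f 0) ⊔ LinearMap.range (f 1) = ⊤ :=
      Submodule.eq_top_of_finrank_eq (by rw [hdim, h0])
    refine ⟨hi0, hi1, ?_, htop⟩
    have hr0 : Module.finrank ℂ (LinearMap.range (f 0)) = m := by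
      rw [LinearMap.finrank_range_of_inj hi0, h1]
    have hr1 : Module.finrank ℂ (LinearMap.range (f 1)) = m := by
      rw [LinearMap.finrank_range_of_inj hi1, h1]
    have hsum := Submodule.finrank_sup_add_finrank_inf_eq
      (LinearMap.range (f 0)) (LinearMap.range (f 1))
    rw [hdim, hr0, hr1] at hsum
    have : Module.finrank ℂ ↥(LinearMap.range (f 0) ⊓ LinearMap.range (f 1)) = 0 := by omega
    exact Submodule.finrank_eq_zero.mp this
  · rintro ⟨hi0, hi1, hinf, _⟩
    intro W₁ W₀ hsub
    set A := W₁.map (f 0)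
    set B := W₁.map (f 1)
    have hAB : A ⊔ B ≤ W₀ := by
      apply sup_le
      · rintro _ ⟨x, hx, rfl⟩; exact hsub 0 x hx
      · rintro _ ⟨x, hx, rfl⟩; exact hsub 1 x hx
    have hA : Module.finrank ℂ A = Module.finrank ℂ W₁ :=
      ((Submodule.equivMapOfInjective _ hi0 W₁).finrank_eq).symm
    have hB : Module.finrank ℂ B = Module.finrank ℂ W₁ :=
      ((Submodule.equivMapOfInjective _ hi1 W₁).finrank_eq).symm
    have hinf2 : A ⊓ B = ⊥ := by
      rw [eq_bot_iff, ← hinf]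
      exact inf_le_inf (LinearMap.map_le_range) (LinearMap.map_le_range)
    have hsum := Submodule.finrank_sup_add_finrank_inf_eq A B
    rw [hinf2, hA, hB, finrank_bot] at hsum
    have hle : Module.finrank ℂ ↥(A ⊔ B) ≤ Module.finrank ℂ W₀ :=
      Submodule.finrank_mono hAB
    rw [h1, h0]
    have : 2 * Module.finrank ℂ W₁ ≤ Module.finrank ℂ W₀ := by omega
    push_cast
    nlinarith
end

section
/- Let m ≥ 1. Any two semistable representations of the Kronecker quiver K₂ of dimension vector (m, 2m) are isomorphic: if (V₋₁, V₀, f₀, f₁) and (V′₋₁, V′₀, f′₀, f′₁) are semistable with dim V₋₁ = dim V′₋₁ = m and dim V₀ = dim V′₀ = 2m, then there exist linear isomorphisms g₋₁ : V₋₁ → V′₋₁ and g₀ : V₀ → V′₀ such that g₀ ∘ f_j = f′_j ∘ g₋₁ for j = 0, 1. -/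
/-!
Semistability applied to the subrepresentation `(V₁, f₀(V₁) + f₁(V₁))` forces the two arrows to
span `V₀`. Since `dim V₀ = 2 · dim V₁`, the sum map `V₁ × V₁ → V₀, (x, y) ↦ f₀ x + f₁ y` is then
an isomorphism, so every such representation is isomorphic to the standard one
`V₁ ⇉ V₁ × V₁` given by the two inclusions.
-/

open Module LinearMap

section Kronecker

variable {n : ℕ} {V₁ V₀ V₁' V₀' : Type}
  [AddCommGroup V₁] [Module ℂ V₁] [AddCommGroup V₀] [Module ℂ V₀]
  [AddCommGroup V₁'] [Module ℂ V₁'] [AddCommGroup V₀'] [Module ℂ V₀']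

def kroneckerSum (f : Fin n → V₁ →ₗ[ℂ] V₀) : (Fin n → V₁) →ₗ[ℂ] V₀ :=
  lsum ℂ (fun _ => V₁) ℂ f

lemma kroneckerSum_single (f : Fin n → V₁ →ₗ[ℂ] V₀) (i : Fin n) (x : V₁) :
    kroneckerSum f (Pi.single i x) = f i x :=
  lsum_piSingle ℂ (fun _ => V₁) ℂ f i x

lemma kroneckerSubrep_top_range_kroneckerSum (f : Fin n → V₁ →ₗ[ℂ] V₀) :
    KroneckerSubrep f ⊤ (range (kroneckerSum f)) :=
  fun i x _ => ⟨Pi.single i x, kroneckerSum_single f i x⟩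

lemma KroneckerSemistable.range_kroneckerSum_eq_top [FiniteDimensional ℂ V₀]
    {f : Fin n → V₁ →ₗ[ℂ] V₀} (hs : KroneckerSemistable f) (hV₁ : 0 < finrank ℂ V₁) :
    range (kroneckerSum f) = ⊤ := by
  have hineq := hs ⊤ _ (kroneckerSubrep_top_range_kroneckerSum f)
  rw [finrank_top] at hineq
  have hle : finrank ℂ V₀ ≤ finrank ℂ (range (kroneckerSum f)) := by
    have : (finrank ℂ V₁ : ℤ) * finrank ℂ V₀ ≤
        finrank ℂ V₁ * finrank ℂ (range (kroneckerSum f)) := by linarith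
    exact_mod_cast le_of_mul_le_mul_left this (by exact_mod_cast hV₁)
  exact Submodule.eq_top_of_finrank_eq (le_antisymm (Submodule.finrank_le _) hle)

lemma KroneckerSemistable.bijective_kroneckerSum
    [FiniteDimensional ℂ V₁] [FiniteDimensional ℂ V₀] {f : Fin n → V₁ →ₗ[ℂ] V₀}
    (hs : KroneckerSemistable f) (hV₁ : 0 < finrank ℂ V₁)
    (hdim : finrank ℂ V₀ = n * finrank ℂ V₁) :
    Function.Bijective (kroneckerSum f) := by
  have hsurj : Function.Surjective (kroneckerSum f) :=
    range_eq_top.mp (hs.range_kroneckerSum_eq_top hV₁)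
  have hrank : finrank ℂ (Fin n → V₁) = finrank ℂ V₀ := by simp [finrank_pi_fintype, hdim]
  exact ⟨(injective_iff_surjective_of_finrank_eq_finrank hrank).mpr hsurj, hsurj⟩

lemma exists_kronecker_iso_of_bijective_kroneckerSum
    {f : Fin n → V₁ →ₗ[ℂ] V₀} {f' : Fin n → V₁' →ₗ[ℂ] V₀'}
    (hf : Function.Bijective (kroneckerSum f)) (hf' : Function.Bijective (kroneckerSum f'))
    (g₁ : V₁ ≃ₗ[ℂ] V₁') :
    ∃ g₀ : V₀ ≃ₗ[ℂ] V₀', ∀ (j : Fin n) (x : V₁), g₀ (f j x) = f' j (g₁ x) := by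
  let E := LinearEquiv.ofBijective _ hf
  let E' := LinearEquiv.ofBijective _ hf'
  refine ⟨E.symm.trans ((LinearEquiv.piCongrRight fun _ => g₁).trans E'), fun j x => ?_⟩
  have hE : f j x = E (Pi.single j x) := (kroneckerSum_single f j x).symm
  have hg : LinearEquiv.piCongrRight (fun _ => g₁) (Pi.single j x) = Pi.single j (g₁ x) :=
    (Pi.single_op (fun _ => g₁) (fun _ => map_zero g₁) j x).symm
  rw [hE, LinearEquiv.trans_apply, LinearEquiv.symm_apply_apply, LinearEquiv.trans_apply, hg]
  exact kroneckerSum_single f' j (g₁ x)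

end Kronecker

/-- Any two semistable representations of `K₂` of dimension vector
`(m, 2m)` are isomorphic. -/
theorem semistable_dim_m_2m_unique_up_to_iso (m : ℕ) (hm : 1 ≤ m)
    (V₁ V₀ V₁' V₀' : Type)
    [AddCommGroup V₁] [Module ℂ V₁] [FiniteDimensional ℂ V₁]
    [AddCommGroup V₀] [Module ℂ V₀] [FiniteDimensional ℂ V₀]
    [AddCommGroup V₁'] [Module ℂ V₁'] [FiniteDimensional ℂ V₁']
    [AddCommGroup V₀'] [Module ℂ V₀'] [FiniteDimensional ℂ V₀']
    (f : Fin 2 → V₁ →ₗ[ℂ] V₀) (f' : Fin 2 → V₁' →ₗ[ℂ] V₀')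
    (h1 : Module.finrank ℂ V₁ = m) (h0 : Module.finrank ℂ V₀ = 2 * m)
    (h1' : Module.finrank ℂ V₁' = m) (h0' : Module.finrank ℂ V₀' = 2 * m)
    (hs : KroneckerSemistable f) (hs' : KroneckerSemistable f') :
    ∃ (g₁ : V₁ ≃ₗ[ℂ] V₁') (g₀ : V₀ ≃ₗ[ℂ] V₀'),
      ∀ (j : Fin 2) (x : V₁), g₀ (f j x) = f' j (g₁ x) := by
  let g₁ : V₁ ≃ₗ[ℂ] V₁' := LinearEquiv.ofFinrankEq _ _ (h1.trans h1'.symm)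
  have hf := hs.bijective_kroneckerSum (by omega) (by rw [h0, h1])
  have hf' := hs'.bijective_kroneckerSum (by omega) (by rw [h0', h1'])
  exact ⟨g₁, exists_kronecker_iso_of_bijective_kroneckerSum hf hf' g₁⟩
end

section
/- Let m ≥ 1 and let (V₋₁, V₀, f₀, f₁) be a semistable representation of the Kronecker quiver K₂ with dim V₋₁ = m and dim V₀ = 2m. Then the representation is stable if and only if m = 1. -/
/-- Stability of a representation of the `n`-arrow Kronecker quiver: every
subrepresentation other than `(0,0)` and `(V₁,V₀)` satisfies the strict inequality
`dim V₁ · dim W₀ - dim V₀ · dim W₁ > 0`. -/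
def KroneckerStable {n : ℕ} {V₁ V₀ : Type} [AddCommGroup V₁] [Module ℂ V₁]
    [AddCommGroup V₀] [Module ℂ V₀] (f : Fin n → V₁ →ₗ[ℂ] V₀) : Prop :=
  ∀ (W₁ : Submodule ℂ V₁) (W₀ : Submodule ℂ V₀), KroneckerSubrep f W₁ W₀ →
    ¬(W₁ = ⊥ ∧ W₀ = ⊥) → ¬(W₁ = ⊤ ∧ W₀ = ⊤) →
    0 < (Module.finrank ℂ V₁ : ℤ) * (Module.finrank ℂ ↥W₀ : ℤ) -
        (Module.finrank ℂ V₀ : ℤ) * (Module.finrank ℂ ↥W₁ : ℤ)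

/-- A semistable representation of `K₂` of dimension vector `(m, 2m)`
is stable iff `m = 1`. -/
theorem stable_iff_m_eq_one (m : ℕ) (hm : 1 ≤ m)
    (V₁ V₀ : Type) [AddCommGroup V₁] [Module ℂ V₁] [FiniteDimensional ℂ V₁]
    [AddCommGroup V₀] [Module ℂ V₀] [FiniteDimensional ℂ V₀]
    (f : Fin 2 → V₁ →ₗ[ℂ] V₀)
    (h1 : Module.finrank ℂ V₁ = m) (h0 : Module.finrank ℂ V₀ = 2 * m)
    (hs : KroneckerSemistable f) :
    KroneckerStable f ↔ m = 1 := by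
  constructor
  · intro hst
    by_contra hne
    have hm2 : 2 ≤ m := by omega
    obtain ⟨x, hx⟩ : ∃ x : V₁, x ≠ 0 := by
      have : 0 < Module.finrank ℂ V₁ := by omega
      have : Nontrivial V₁ := Module.nontrivial_of_finrank_pos this
      exact exists_ne 0
    set W₁ : Submodule ℂ V₁ := Submodule.span ℂ {x} with hW₁
    set W₀ : Submodule ℂ V₀ := Submodule.span ℂ {f 0 x, f 1 x} with hW₀
    have hdW₁ : Module.finrank ℂ ↥W₁ = 1 := finrank_span_singleton hx
    have hdW₀ : Module.finrank ℂ ↥W₀ ≤ 2 := by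
      classical
      have h1' := finrank_span_le_card (R := ℂ) ({f 0 x, f 1 x} : Set V₀)
      have hcard : ({f 0 x, f 1 x} : Set V₀).toFinset.card ≤ 2 := by
        rw [Set.toFinset_insert, Set.toFinset_singleton]
        exact (Finset.card_insert_le _ _).trans (by simp)
      rw [hW₀]
      omega
    have hsub : KroneckerSubrep f W₁ W₀ := by
      intro i y hy
      rw [hW₁, Submodule.mem_span_singleton] at hy
      obtain ⟨c, rfl⟩ := hy
      rw [map_smul]
      refine Submodule.smul_mem _ _ (Submodule.subset_span ?_)
      fin_cases i <;> simp
    have hnotbot : ¬(W₁ = ⊥ ∧ W₀ = ⊥) := by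
      rintro ⟨hb, -⟩
      exact hx (by simpa [hW₁, Submodule.span_singleton_eq_bot] using hb)
    have hnottop : ¬(W₁ = ⊤ ∧ W₀ = ⊤) := by
      rintro ⟨ht, -⟩
      have : Module.finrank ℂ ↥W₁ = m := by rw [ht, finrank_top, h1]
      omega
    have := hst W₁ W₀ hsub hnotbot hnottop
    rw [h1, h0, hdW₁] at this
    push_cast at this
    have h2 : (Module.finrank ℂ ↥W₀ : ℤ) ≤ 2 := by exact_mod_cast hdW₀
    linarith [mul_le_mul_of_nonneg_left h2 (show (0:ℤ) ≤ m by positivity)]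
  · intro hm1
    subst hm1
    intro W₁ W₀ hsub hnotbot hnottop
    have hss := hs W₁ W₀ hsub
    rw [h1, h0] at hss ⊢
    have ha : Module.finrank ℂ ↥W₁ ≤ 1 := by have := Submodule.finrank_le W₁; omega
    have hb : Module.finrank ℂ ↥W₀ ≤ 2 := by have := Submodule.finrank_le W₀; omega
    rcases lt_or_eq_of_le hss with h | h
    · exact h
    · exfalso
      have heq : Module.finrank ℂ ↥W₀ = 2 * Module.finrank ℂ ↥W₁ := by
        have := h.symm
        push_cast at this
        omega
      rcases Nat.eq_zero_or_pos (Module.finrank ℂ ↥W₁) with h0' | h1'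
      · have hW₁b : W₁ = ⊥ := Submodule.finrank_eq_zero.mp h0'
        have hW₀b : W₀ = ⊥ := Submodule.finrank_eq_zero.mp (by omega)
        exact hnotbot ⟨hW₁b, hW₀b⟩
      · have ha1 : Module.finrank ℂ ↥W₁ = 1 := by omega
        have hW₁t : W₁ = ⊤ := Submodule.eq_top_of_finrank_eq (by omega)
        have hW₀t : W₀ = ⊤ := Submodule.eq_top_of_finrank_eq (by omega)
        exact hnottop ⟨hW₁t, hW₀t⟩
end

section
/- Let m ≥ 1 and let (V₋₁, V₀, f₀, f₁) be a representation of the Kronecker quiver K₂ with dim V₋₁ = dim V₀ = m. Then the representation is semistable if and only if there exist complex numbers z₀, z₁ such that the linear map z₀·f₀ + z₁·f₁ : V₋₁ → V₀ is bijective. -/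
open Polynomial Module

private lemma aux_coeff_X_mul_zero (q : ℂ[X]) : (X * q).coeff 0 = 0 := by
  rw [Polynomial.mul_coeff_zero, Polynomial.coeff_X_zero, zero_mul]

/-- A representation `(f₀, f₁)` of `K₂` of dimension vector `(m, m)`
is semistable iff some linear combination `z₀ f₀ + z₁ f₁` is bijective. -/
theorem semistable_iff_exists_bijective_pencil (m : ℕ) (hm : 1 ≤ m)
    (V₁ V₀ : Type) [AddCommGroup V₁] [Module ℂ V₁] [FiniteDimensional ℂ V₁]
    [AddCommGroup V₀] [Module ℂ V₀] [FiniteDimensional ℂ V₀]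
    (f : Fin 2 → V₁ →ₗ[ℂ] V₀)
    (h1 : Module.finrank ℂ V₁ = m) (h0 : Module.finrank ℂ V₀ = m) :
    KroneckerSemistable f ↔
      ∃ z₀ z₁ : ℂ, Function.Bijective ⇑(z₀ • f 0 + z₁ • f 1) := by
  constructor
  · -- hard direction: semistable → bijective pencil member
    intro hss
    by_contra hno
    push_neg at hno
    let b₁ : Basis (Fin m) ℂ V₁ := Module.finBasisOfFinrankEq ℂ V₁ h1
    let b₀ : Basis (Fin m) ℂ V₀ := Module.finBasisOfFinrankEq ℂ V₀ h0
    set A := LinearMap.toMatrix b₁ b₀ (f 0) with hA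
    set B := LinearMap.toMatrix b₁ b₀ (f 1) with hB
    -- every member of the pencil has zero determinant
    have hdet : ∀ z₀ z₁ : ℂ, (z₀ • A + z₁ • B).det = 0 := by
      intro z₀ z₁
      by_contra hd
      apply hno z₀ z₁
      have heq : z₀ • f 0 + z₁ • f 1 = Matrix.toLin b₁ b₀ (z₀ • A + z₁ • B) := by
        simp [hA, hB, Matrix.toLin_toMatrix]
      rw [heq]
      have hu : IsUnit (z₀ • A + z₁ • B).det := isUnit_iff_ne_zero.mpr hd
      exact (Matrix.toLinOfInv b₁ b₀ (Matrix.mul_nonsing_inv _ hu)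
        (Matrix.nonsing_inv_mul _ hu)).bijective
    -- the determinant of the pencil over ℂ[X] vanishes identically
    set M : Matrix (Fin m) (Fin m) ℂ[X] :=
      Matrix.of (fun i k => Polynomial.C (A i k) + (X : ℂ[X]) * Polynomial.C (B i k)) with hM
    have hMdet : M.det = 0 := by
      have h0' : ∀ t : ℂ, Polynomial.eval t M.det = 0 := by
        intro t
        have hmap : M.map (Polynomial.evalRingHom t) = A + t • B := by
          ext i j
          simp only [hM, Matrix.map_apply, Matrix.of_apply, Matrix.add_apply, Matrix.smul_apply,
            smul_eq_mul, coe_evalRingHom, eval_add, eval_mul, eval_C, eval_X]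
        calc Polynomial.eval t M.det = (Polynomial.evalRingHom t) M.det := rfl
          _ = ((Polynomial.evalRingHom t).mapMatrix M).det := RingHom.map_det _ _
          _ = (M.map (Polynomial.evalRingHom t)).det := by rw [RingHom.mapMatrix_apply]
          _ = (A + t • B).det := by rw [hmap]
          _ = 0 := by simpa using hdet 1 t
      have := Polynomial.funext (p := M.det) (q := 0) (fun r => by simp [h0' r])
      simpa using this
    obtain ⟨p, hp0, hpM⟩ := (Matrix.exists_mulVec_eq_zero_iff).mpr hMdet
    -- coefficient vectors
    have hMe : ∀ i k : Fin m, M i k = Polynomial.C (A i k) + (X : ℂ[X]) * Polynomial.C (B i k) :=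
      fun i k => rfl
    set c : ℕ → (Fin m → ℂ) := fun j k => (p k).coeff j with hc
    have key0 : A.mulVec (c 0) = 0 := by
      funext i
      have h := congrFun hpM i
      have h' := congrArg (fun q : ℂ[X] => q.coeff 0) h
      simp only [Matrix.mulVec, dotProduct, hMe, add_mul, mul_assoc,
        Polynomial.finset_sum_coeff, Polynomial.coeff_add, Polynomial.coeff_C_mul,
        aux_coeff_X_mul_zero, mul_zero, add_zero,
        Pi.zero_apply, Polynomial.coeff_zero] at h'
      simpa [Matrix.mulVec, dotProduct, hc] using h'
    have keyS : ∀ j, A.mulVec (c (j + 1)) + B.mulVec (c j) = 0 := by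
      intro j
      funext i
      have h := congrFun hpM i
      have h' := congrArg (fun q : ℂ[X] => q.coeff (j + 1)) h
      simp only [Matrix.mulVec, dotProduct, hMe, add_mul, mul_assoc,
        Polynomial.finset_sum_coeff, Polynomial.coeff_add, Polynomial.coeff_C_mul,
        Polynomial.coeff_X_mul,
        Pi.zero_apply, Polynomial.coeff_zero] at h'
      simpa [Matrix.mulVec, dotProduct, hc, Finset.sum_add_distrib] using h'
    -- back to the vector spaces
    set v : ℕ → V₁ := fun j => b₁.equivFun.symm (c j) with hv
    have hveq : ∀ j, v j = b₁.equivFun.symm (c j) := fun j => rfl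
    have hrepr : ∀ j, ⇑(b₁.repr (v j)) = c j := by
      intro j
      funext k
      rw [hveq j]
      rw [show (b₁.repr (b₁.equivFun.symm (c j))) k = b₁.equivFun (b₁.equivFun.symm (c j)) k
        from rfl, LinearEquiv.apply_symm_apply]
    have hfg : ∀ (g : V₁ →ₗ[ℂ] V₀) (j : ℕ),
        g (v j) = b₀.equivFun.symm ((LinearMap.toMatrix b₁ b₀ g).mulVec (c j)) := by
      intro g j
      conv_lhs => rw [← Matrix.toLin_toMatrix b₁ b₀ g]
      rw [Matrix.toLin_apply, Basis.equivFun_symm_apply, hrepr]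
    have hrel : ∀ j, f 0 (v (j + 1)) + f 1 (v j) = 0 := by
      intro j
      rw [hfg (f 0), hfg (f 1), ← map_add, ← hA, ← hB, keyS j, map_zero]
    have hrel0 : f 0 (v 0) = 0 := by
      rw [hfg (f 0), ← hA, key0, map_zero]
    -- least index with nonzero coefficient vector
    have hex : ∃ j, c j ≠ 0 := by
      by_contra hall
      push_neg at hall
      apply hp0
      funext k
      apply Polynomial.ext
      intro j
      simpa [hc] using congrFun (hall j) k
    let k₀ := Nat.find hex
    have hk₀ : c k₀ ≠ 0 := Nat.find_spec hex
    have hmin : ∀ j < k₀, c j = 0 := fun j hj => by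
      have := Nat.find_min hex hj
      simpa using this
    have hv₀ : v k₀ ≠ 0 := by
      intro h
      apply hk₀
      rw [hveq k₀] at h
      exact b₁.equivFun.symm.map_eq_zero_iff.mp h
    have hfv₀ : f 0 (v k₀) = 0 := by
      rcases Nat.eq_zero_or_pos k₀ with h | h
      · rw [h]; exact hrel0
      · have hj : k₀ - 1 + 1 = k₀ := Nat.succ_pred_eq_of_pos h
        have h2 := hrel (k₀ - 1)
        have hz : v (k₀ - 1) = 0 := by
          rw [hveq, hmin _ (Nat.sub_lt h one_pos)]; simp
        rw [hj, hz, map_zero, add_zero] at h2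
        exact h2
    -- destabilizing subrepresentation
    set W₁ : Submodule ℂ V₁ := Submodule.span ℂ (Set.range v) with hW₁
    set W₀ : Submodule ℂ V₀ := W₁.map (f 0) with hW₀
    have hsub : KroneckerSubrep f W₁ W₀ := by
      intro i
      fin_cases i
      · intro x hx
        exact Submodule.mem_map_of_mem hx
      · intro x hx
        have hle : W₁ ≤ Submodule.comap (f 1) W₀ := by
          rw [hW₁, Submodule.span_le]
          rintro _ ⟨j, rfl⟩
          simp only [SetLike.mem_coe, Submodule.mem_comap]
          rw [eq_neg_of_add_eq_zero_right (hrel j)]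
          exact W₀.neg_mem (Submodule.mem_map_of_mem
            (Submodule.subset_span ⟨j + 1, rfl⟩))
        exact hle hx
    -- dimension count
    set g : W₁ →ₗ[ℂ] V₀ := (f 0).domRestrict W₁ with hg
    have hvmem : v k₀ ∈ W₁ := Submodule.subset_span ⟨k₀, rfl⟩
    have hkerel : (⟨v k₀, hvmem⟩ : W₁) ∈ LinearMap.ker g := by
      simp [hg, LinearMap.mem_ker, LinearMap.domRestrict_apply, hfv₀]
    have hkerne : (⟨v k₀, hvmem⟩ : W₁) ≠ 0 := by
      intro h
      exact hv₀ (congrArg Subtype.val h)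
    have hkernt : Nontrivial (LinearMap.ker g) :=
      nontrivial_of_ne ⟨_, hkerel⟩ 0 (by
        intro h
        exact hkerne (congrArg Subtype.val h))
    have hkerpos : 0 < finrank ℂ (LinearMap.ker g) := finrank_pos
    have hrange : LinearMap.range g = W₀ := by
      rw [hg, LinearMap.range_domRestrict, hW₀]
    have hrn := LinearMap.finrank_range_add_finrank_ker g
    have hlt : finrank ℂ W₀ < finrank ℂ W₁ := by
      rw [← hrange]
      omega
    have hssW := hss W₁ W₀ hsub
    rw [h1, h0] at hssW
    have hmz : (0 : ℤ) < m := by exact_mod_cast hm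
    have hltz : (finrank ℂ W₀ : ℤ) < (finrank ℂ W₁ : ℤ) := by exact_mod_cast hlt
    nlinarith
  · -- easy direction
    rintro ⟨z₀, z₁, hbij⟩ W₁ W₀ hsub
    set g := z₀ • f 0 + z₁ • f 1 with hg
    have hmap : W₁.map g ≤ W₀ := by
      rintro y ⟨x, hx, rfl⟩
      have ha := hsub 0 x hx
      have hb := hsub 1 x hx
      have : g x = z₀ • f 0 x + z₁ • f 1 x := by simp [hg]
      rw [this]
      exact W₀.add_mem (W₀.smul_mem _ ha) (W₀.smul_mem _ hb)
    have heq : finrank ℂ W₁ = finrank ℂ (W₁.map g) :=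
      (Submodule.equivMapOfInjective g hbij.injective W₁).finrank_eq
    have hle : finrank ℂ (W₁.map g) ≤ finrank ℂ W₀ := Submodule.finrank_mono hmap
    rw [h1, h0]
    have h' : (finrank ℂ W₁ : ℤ) ≤ (finrank ℂ W₀ : ℤ) := by
      exact_mod_cast heq ▸ hle
    nlinarith [Int.ofNat_nonneg m]
end

section
/- Let m ≥ 2. No representation (V₋₁, V₀, f₀, f₁) of the Kronecker quiver K₂ with dim V₋₁ = dim V₀ = m is stable: every such representation admits a subrepresentation (W₋₁, W₀), different from (0,0) and (V₋₁,V₀), with dim W₀ ≤ dim W₋₁. -/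
open Module Submodule

theorem LinearMap.exists_ne_zero_apply_mem_span_singleton_of_finrank_eq {K V W : Type*} [Field K]
    [IsAlgClosed K] [AddCommGroup V] [Module K V] [FiniteDimensional K V] [Nontrivial V]
    [AddCommGroup W] [Module K W] [FiniteDimensional K W]
    (hdim : finrank K V = finrank K W) (f g : V →ₗ[K] W) :
    ∃ v ≠ 0, ∃ w, f v ∈ K ∙ w ∧ g v ∈ K ∙ w := by
  by_cases hg : Function.Injective g
  · let e := g.linearEquivOfInjective hg hdim
    obtain ⟨c, hc⟩ := Module.End.exists_eigenvalue (e.symm.toLinearMap ∘ₗ f)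
    obtain ⟨v, hv⟩ := hc.exists_hasEigenvector
    have hfv : f v = c • g v := by
      simpa [e, map_smul] using congrArg e hv.apply_eq_smul
    exact ⟨v, hv.right, g v, hfv ▸ smul_mem _ _ (mem_span_singleton_self _),
      mem_span_singleton_self _⟩
  · rw [← LinearMap.ker_eq_bot] at hg
    obtain ⟨v, hv_ker, hv⟩ := exists_mem_ne_zero_of_ne_bot hg
    exact ⟨v, hv, f v, mem_span_singleton_self _, by simp [LinearMap.mem_ker.mp hv_ker]⟩

section Kronecker

variable {n : ℕ} {V₁ V₀ : Type} [AddCommGroup V₁] [Module ℂ V₁] [AddCommGroup V₀]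
  [Module ℂ V₀] (f : Fin n → V₁ →ₗ[ℂ] V₀)

theorem kroneckerSubrep_span_singleton {v : V₁} {w : V₀} (h : ∀ i, f i v ∈ ℂ ∙ w) :
    KroneckerSubrep f (ℂ ∙ v) (ℂ ∙ w) := by
  intro i x hx
  obtain ⟨a, rfl⟩ := mem_span_singleton.mp hx
  rw [map_smul]
  exact smul_mem _ _ (h i)

theorem not_kroneckerStable_of_finrank_le {W₁ : Submodule ℂ V₁} {W₀ : Submodule ℂ V₀}
    (hdim : finrank ℂ V₁ = finrank ℂ V₀) (hW : KroneckerSubrep f W₁ W₀)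
    (hbot : ¬(W₁ = ⊥ ∧ W₀ = ⊥)) (htop : ¬(W₁ = ⊤ ∧ W₀ = ⊤))
    (hle : finrank ℂ W₀ ≤ finrank ℂ W₁) : ¬ KroneckerStable f := by
  intro hst
  have hpos := hst W₁ W₀ hW hbot htop
  rw [hdim, ← mul_sub] at hpos
  have : (finrank ℂ W₀ : ℤ) - finrank ℂ W₁ ≤ 0 := by omega
  nlinarith

end Kronecker

/-- For `m ≥ 2`, no representation of `K₂` of dimension vector `(m, m)`
is stable: every such representation admits a proper nonzero subrepresentation `(W₁, W₀)`
with `dim W₀ ≤ dim W₁`. -/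
theorem not_stable_dim_m_m (m : ℕ) (hm : 2 ≤ m)
    (V₁ V₀ : Type) [AddCommGroup V₁] [Module ℂ V₁] [FiniteDimensional ℂ V₁]
    [AddCommGroup V₀] [Module ℂ V₀] [FiniteDimensional ℂ V₀]
    (f : Fin 2 → V₁ →ₗ[ℂ] V₀)
    (h1 : Module.finrank ℂ V₁ = m) (h0 : Module.finrank ℂ V₀ = m) :
    ¬ KroneckerStable f ∧
      ∃ (W₁ : Submodule ℂ V₁) (W₀ : Submodule ℂ V₀),
        KroneckerSubrep f W₁ W₀ ∧ ¬(W₁ = ⊥ ∧ W₀ = ⊥) ∧ ¬(W₁ = ⊤ ∧ W₀ = ⊤) ∧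
        Module.finrank ℂ ↥W₀ ≤ Module.finrank ℂ ↥W₁ := by
  have : Nontrivial V₁ := Module.nontrivial_of_finrank_pos (R := ℂ) (by omega)
  obtain ⟨v, hv, w, hw⟩ := LinearMap.exists_ne_zero_apply_mem_span_singleton_of_finrank_eq
    (h1.trans h0.symm) (f 0) (f 1)
  have hW : KroneckerSubrep f (ℂ ∙ v) (ℂ ∙ w) :=
    kroneckerSubrep_span_singleton f fun i ↦ by fin_cases i <;> simp [hw]
  have hv_dim : finrank ℂ (ℂ ∙ v) = 1 := finrank_span_singleton hv
  have hw_dim : finrank ℂ (ℂ ∙ w) ≤ 1 := by simpa using finrank_span_le_card ({w} : Set V₀)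
  have hbot : ¬(ℂ ∙ v = ⊥ ∧ ℂ ∙ w = ⊥) := fun h ↦ hv (span_singleton_eq_bot.mp h.1)
  have htop : ¬(ℂ ∙ v = ⊤ ∧ ℂ ∙ w = ⊤) := fun h ↦ by
    have := finrank_top ℂ V₁
    rw [← h.1, hv_dim] at this
    omega
  have hle : finrank ℂ (ℂ ∙ w) ≤ finrank ℂ (ℂ ∙ v) := hv_dim ▸ hw_dim
  exact ⟨not_kroneckerStable_of_finrank_le f (h1.trans h0.symm) hW hbot htop hle,
    _, _, hW, hbot, htop, hle⟩
end

section
/- Let a₁, a₂, a₃ ∈ ℂ³ and let b₁, b₂, b₃ : ℂ³ → ℂ be linear functionals, regarded as a representation of the Beilinson quiver B₃ of dimension vector (1,3,1) (the three arrows of the first level are the maps λ ↦ λ·a_i from ℂ to ℂ³, and the three arrows of the second level are the b_j). Call a triple of subspaces (W₋₁ ⊆ ℂ, W₀ ⊆ ℂ³, W₁ ⊆ ℂ) a subrepresentation if a_i·W₋₁ ⊆ W₀ and b_j(W₀) ⊆ W₁ for all i, j, and call the representation (−4,1,1)-semistable if every subrepresentation satisfies −4·dim W₋₁ + dim W₀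 + dim W₁ ≥ 0. Then the representation is (−4,1,1)-semistable if and only if the vectors a₁, a₂, a₃ are linearly independent (i.e. the 3×3 matrix a with columns a₁, a₂, a₃ has rank 3) and (b₁, b₂, b₃) ≠ (0, 0, 0). -/
/-- A representation of the Beilinson quiver `B₃` of dimension vector
`(1,3,1)`, given by vectors `a₁, a₂, a₃ ∈ ℂ³` and linear functionals `b₁, b₂, b₃ : ℂ³ → ℂ`,
is `(-4,1,1)`-semistable iff the `a_i` are linearly independent and `(b₁,b₂,b₃) ≠ 0`. -/
theorem beilinson_131_semistable_iff (a : Fin 3 → (Fin 3 → ℂ))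
    (b : Fin 3 → ((Fin 3 → ℂ) →ₗ[ℂ] ℂ)) :
    (∀ (Wm : Submodule ℂ ℂ) (W₀ : Submodule ℂ (Fin 3 → ℂ)) (W₁ : Submodule ℂ ℂ),
        (∀ i : Fin 3, ∀ c ∈ Wm, c • a i ∈ W₀) →
        (∀ j : Fin 3, ∀ x ∈ W₀, b j x ∈ W₁) →
        0 ≤ -4 * (Module.finrank ℂ ↥Wm : ℤ) + (Module.finrank ℂ ↥W₀ : ℤ) +
              (Module.finrank ℂ ↥W₁ : ℤ)) ↔
      (LinearIndependent ℂ a ∧ b ≠ 0) := by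
  constructor
  · intro h
    constructor
    · -- linear independence
      have h1 := h ⊤ (Submodule.span ℂ (Set.range a)) ⊤
        (fun i c _ => Submodule.smul_mem _ c (Submodule.subset_span ⟨i, rfl⟩))
        (fun j x _ => trivial)
      have hle : Module.finrank ℂ ↥(Submodule.span ℂ (Set.range a)) ≤ 3 := by
        have := Submodule.finrank_le (Submodule.span ℂ (Set.range a))
        simpa using this
      have hge : (3 : ℤ) ≤ Module.finrank ℂ ↥(Submodule.span ℂ (Set.range a)) := by
        simp [Module.finrank_self] at h1
        omega
      have heq : Module.finrank ℂ ↥(Submodule.span ℂ (Set.range a)) = 3 := by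
        omega
      have htop : Submodule.span ℂ (Set.range a) = ⊤ :=
        Submodule.eq_top_of_finrank_eq (by simpa using heq)
      exact linearIndependent_of_top_le_span_of_card_eq_finrank htop.ge (by simp)
    · -- b ≠ 0
      intro hb
      have h2 := h ⊤ ⊤ ⊥ (fun i c _ => trivial)
        (fun j x _ => by simp [hb])
      simp [Module.finrank_self] at h2
  · rintro ⟨ha, hb⟩ Wm W₀ W₁ hW₀ hW₁
    rcases eq_or_ne Wm ⊥ with h | h
    · subst h
      simp
      positivity
    · -- Wm nontrivial: a i ∈ W₀
      obtain ⟨c, hc, hc0⟩ := Submodule.exists_mem_ne_zero_of_ne_bot h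
      have haW : ∀ i, a i ∈ W₀ := fun i => by
        have := hW₀ i c hc
        have : c⁻¹ • (c • a i) ∈ W₀ := Submodule.smul_mem _ _ this
        simpa [smul_smul, inv_mul_cancel₀ hc0] using this
      have hspan : Submodule.span ℂ (Set.range a) ≤ W₀ :=
        Submodule.span_le.mpr (by rintro x ⟨i, rfl⟩; exact haW i)
      have h3 : (3 : ℕ) ≤ Module.finrank ℂ ↥W₀ := by
        have := Submodule.finrank_mono hspan
        have hcard : Module.finrank ℂ ↥(Submodule.span ℂ (Set.range a)) = 3 := by
          simpa using finrank_span_eq_card ha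
        omega
      have hW0top : W₀ = ⊤ := Submodule.eq_top_of_finrank_eq
        (le_antisymm (by simpa using Submodule.finrank_le W₀) (by simpa using h3))
      -- W₁ nontrivial
      obtain ⟨j, hj⟩ := Function.ne_iff.mp hb
      obtain ⟨x, hx⟩ : ∃ x, b j x ≠ 0 := by
        by_contra hx
        push_neg at hx
        exact hj (LinearMap.ext hx)
      have hW1 : W₁ ≠ ⊥ := by
        intro hbot
        have := hW₁ j x (hW0top ▸ Submodule.mem_top)
        rw [hbot, Submodule.mem_bot] at this
        exact hx this
      have h1 : 1 ≤ Module.finrank ℂ ↥W₁ := by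
        have : Nontrivial ↥W₁ := Submodule.nontrivial_iff_ne_bot.mpr hW1
        exact Module.finrank_pos
      have hm : Module.finrank ℂ ↥Wm ≤ 1 := by
        simpa using Submodule.finrank_le Wm
      have hw0 : Module.finrank ℂ ↥W₀ = 3 := by rw [hW0top]; simp
      omega
end
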